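/- arXiv:1205.2446 — 2 statements merged into one kernel-verified Lean document; each statement's English description precedes it below -/
import Mathlib

section
/- With notation as above (two predictors X₁, X₂, response Y, multiple regression coefficients b₁, b₂, and c₂₁ the slope of the regression of X₂ on X₁), define X₂* = X₂ − c₂₁X₁. Then the slope a₂* of the simple regression of Y on X₂* equals b₂. -/
open Finset Filter

/-- Sample mean of a data vector. -/
noncomputable def mean (p : ℕ) (x : Fin p → ℝ) : ℝ := (∑ i, x i) / (p : ℝ)

/-- Sample covariance of two data vectors. -/
noncomputable def cov (p : ℕ) (x y : Fin p → ℝ) : ℝ :=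
  (∑ i, (x i - mean p x) * (y i - mean p y)) / (p : ℝ)

/-- Sample variance of a data vector. -/
noncomputable def svar (p : ℕ) (x : Fin p → ℝ) : ℝ := cov p x x

/-- Slope of the simple least-squares regression of `y` on `x`. -/
noncomputable def regSlope (p : ℕ) (x y : Fin p → ℝ) : ℝ := cov p x y / svar p x

/-!
Frisch–Waugh: write `Y = b₀ + b₁X₁ + b₂X₂ + r`. Minimality of the fit makes the residual `r`
orthogonal to `1`, `X₁` and `X₂`, so it is uncorrelated with `X₁` and `X₂`. The adjusted
predictor `X₂* = X₂ - c₂₁X₁` is uncorrelated with `X₁` by the choice of `c₂₁`, hence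
`cov(X₂*, Y) = b₂ cov(X₂*, X₂) = b₂ var(X₂*)`.
-/

theorem sum_mul_eq_zero_of_forall_sum_sq_le {ι : Type*} [Fintype ι] (r g : ι → ℝ)
    (h : ∀ t : ℝ, ∑ i, r i ^ 2 ≤ ∑ i, (r i - t * g i) ^ 2) :
    ∑ i, r i * g i = 0 := by
  have hquad : ∀ t : ℝ, 0 ≤ (∑ i, g i ^ 2) * (t * t) + (-2 * ∑ i, r i * g i) * t + 0 := by
    intro t
    have hexp : ∑ i, (r i - t * g i) ^ 2
        = ∑ i, r i ^ 2 + ((∑ i, g i ^ 2) * (t * t) + (-2 * ∑ i, r i * g i) * t) := by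
      simp only [sum_mul, mul_sum, ← sum_add_distrib]
      exact sum_congr rfl fun i _ => by ring
    linarith [h t]
  have hdisc := discrim_le_zero hquad
  rw [discrim] at hdisc
  nlinarith [sq_nonneg (∑ i, r i * g i)]

theorem sum_residual_mul_eq_zero {ι : Type*} [Fintype ι] (Y X1 X2 : ι → ℝ) (b0 b1 b2 : ℝ)
    (hmin : ∀ t0 t1 t2 : ℝ,
      ∑ i, (Y i - b0 - b1 * X1 i - b2 * X2 i) ^ 2 ≤ ∑ i, (Y i - t0 - t1 * X1 i - t2 * X2 i) ^ 2)
    {g : ι → ℝ} (hg : g = 1 ∨ g = X1 ∨ g = X2) :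
    ∑ i, (Y i - b0 - b1 * X1 i - b2 * X2 i) * g i = 0 := by
  refine sum_mul_eq_zero_of_forall_sum_sq_le _ _ fun t => ?_
  rcases hg with rfl | rfl | rfl
  · convert hmin (b0 + t) b1 b2 using 3 with i; simp only [Pi.one_apply]; ring
  · convert hmin b0 (b1 + t) b2 using 3 with i; ring
  · convert hmin b0 b1 (b2 + t) using 3 with i; ring

section Covariance

variable {p : ℕ}

theorem sum_sub_mean (x : Fin p → ℝ) : ∑ i, (x i - mean p x) = 0 := by
  rcases eq_or_ne p 0 with rfl | hp
  · simp
  · have hp' : (p : ℝ) ≠ 0 := Nat.cast_ne_zero.mpr hp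
    simp [sum_sub_distrib, mean, mul_div_cancel₀ _ hp']

theorem cov_eq_sum_sub_mean_mul (x y : Fin p → ℝ) :
    cov p x y = (∑ i, (x i - mean p x) * y i) / p := by
  have hcentre : ∑ i, (x i - mean p x) * mean p y = 0 := by rw [← sum_mul, sum_sub_mean, zero_mul]
  simp only [cov, mul_sub, sum_sub_distrib, hcentre, sub_zero]

theorem cov_comm (x y : Fin p → ℝ) : cov p x y = cov p y x := by
  simp only [cov, mul_comm]

theorem cov_add_right (x y z : Fin p → ℝ) : cov p x (y + z) = cov p x y + cov p x z := by
  simp only [cov_eq_sum_sub_mean_mul, Pi.add_apply, mul_add, sum_add_distrib, add_div]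

theorem cov_smul_right (a : ℝ) (x y : Fin p → ℝ) : cov p x (a • y) = a * cov p x y := by
  simp only [cov_eq_sum_sub_mean_mul, Pi.smul_apply, smul_eq_mul, mul_left_comm _ a, ← mul_sum,
    mul_div_assoc]

theorem cov_sub_right (x y z : Fin p → ℝ) : cov p x (y - z) = cov p x y - cov p x z := by
  simp only [cov_eq_sum_sub_mean_mul, Pi.sub_apply, mul_sub, sum_sub_distrib, sub_div]

theorem cov_const_right (x : Fin p → ℝ) (a : ℝ) : cov p x (fun _ => a) = 0 := by
  rw [cov_eq_sum_sub_mean_mul, ← sum_mul, sum_sub_mean, zero_mul, zero_div]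

theorem cov_smul_left (a : ℝ) (x y : Fin p → ℝ) : cov p (a • x) y = a * cov p x y := by
  rw [cov_comm, cov_smul_right, cov_comm]

theorem cov_sub_left (x y z : Fin p → ℝ) : cov p (x - y) z = cov p x z - cov p y z := by
  rw [cov_comm, cov_sub_right, cov_comm, cov_comm z]

theorem cov_eq_zero_of_sum_eq_zero {x r : Fin p → ℝ} (hr : ∑ i, r i = 0)
    (hxr : ∑ i, x i * r i = 0) : cov p x r = 0 := by
  rw [cov_eq_sum_sub_mean_mul]
  simp only [sub_mul, sum_sub_distrib, ← mul_sum, hxr, hr, mul_zero, sub_zero, zero_div]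

theorem cov_eq_zero_of_svar_eq_zero {x : Fin p → ℝ} (hx : svar p x = 0) (y : Fin p → ℝ) :
    cov p x y = 0 := by
  rcases eq_or_ne (p : ℝ) 0 with hp | hp
  · simp [cov, hp]
  have hsq : ∑ i, (x i - mean p x) ^ 2 = 0 := by
    simpa [svar, cov, hp, sq] using hx
  have hcentred : ∀ i, x i - mean p x = 0 := fun i =>
    pow_eq_zero_iff two_ne_zero |>.mp <|
      (sum_eq_zero_iff_of_nonneg fun j _ => sq_nonneg _).mp hsq i (mem_univ i)
  simp [cov, hcentred]

theorem regSlope_mul_svar (x y : Fin p → ℝ) : regSlope p x y * svar p x = cov p x y := by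
  rcases eq_or_ne (svar p x) 0 with hx | hx
  · rw [hx, mul_zero, cov_eq_zero_of_svar_eq_zero hx]
  · exact div_mul_cancel₀ _ hx

end Covariance

theorem multiple_eq_simple_on_adjusted_second_general
    (p : ℕ) (Y X1 X2 : Fin p → ℝ) (b0 b1 b2 : ℝ)
    (hBmin : ∀ t0 t1 t2 : ℝ,
      ∑ i, (Y i - b0 - b1 * X1 i - b2 * X2 i)^2 ≤ ∑ i, (Y i - t0 - t1 * X1 i - t2 * X2 i)^2)
    (hvstar : svar p (fun i => X2 i - regSlope p X1 X2 * X1 i) ≠ 0) :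
    regSlope p (fun i => X2 i - regSlope p X1 X2 * X1 i) Y = b2 := by
  set c := regSlope p X1 X2
  set r : Fin p → ℝ := fun i => Y i - b0 - b1 * X1 i - b2 * X2 i
  have hY : Y = (fun _ => b0) + b1 • X1 + b2 • X2 + r := by
    ext i; simp only [Pi.add_apply, Pi.smul_apply, smul_eq_mul, r]; ring
  have hX : (fun i => X2 i - c * X1 i) = X2 - c • X1 := rfl
  have hr : ∀ {g}, g = 1 ∨ g = X1 ∨ g = X2 → ∑ i, r i * g i = 0 :=
    sum_residual_mul_eq_zero Y X1 X2 b0 b1 b2 hBmin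
  have hr1 : ∑ i, r i = 0 := by simpa using hr (Or.inl rfl)
  have hcov_r : ∀ x, x = X1 ∨ x = X2 → cov p x r = 0 := fun x hx =>
    cov_eq_zero_of_sum_eq_zero hr1 <| by simpa only [mul_comm] using hr (Or.inr hx)
  have hX1 : cov p (X2 - c • X1) X1 = 0 := by
    rw [cov_sub_left, cov_smul_left, cov_comm, ← regSlope_mul_svar, svar, sub_self]
  have hXr : cov p (X2 - c • X1) r = 0 := by
    rw [cov_sub_left, cov_smul_left, hcov_r X1 (Or.inl rfl), hcov_r X2 (Or.inr rfl)]; ring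
  have hXX : svar p (X2 - c • X1) = cov p (X2 - c • X1) X2 := by
    rw [svar, cov_sub_right, cov_smul_right, hX1, mul_zero, sub_zero]
  rw [hX] at hvstar ⊢
  rw [regSlope, div_eq_iff hvstar, hY, cov_add_right, cov_add_right, cov_add_right,
    cov_const_right, cov_smul_right, cov_smul_right, hX1, hXr, hXX]
  ring

theorem multiple_eq_simple_on_adjusted_second
    (p : ℕ) (Y X1 X2 : Fin p → ℝ) (b0 b1 b2 : ℝ)
    (hBmin : ∀ t0 t1 t2 : ℝ,
      ∑ i, (Y i - b0 - b1 * X1 i - b2 * X2 i)^2 ≤ ∑ i, (Y i - t0 - t1 * X1 i - t2 * X2 i)^2)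
    (hBuniq : ∀ t0 t1 t2 : ℝ,
      ∑ i, (Y i - t0 - t1 * X1 i - t2 * X2 i)^2 ≤ ∑ i, (Y i - b0 - b1 * X1 i - b2 * X2 i)^2 →
      t0 = b0 ∧ t1 = b1 ∧ t2 = b2)
    (hv1 : svar p X1 ≠ 0) (hv2 : svar p X2 ≠ 0)
    (hr : (cov p X1 X2)^2 ≠ svar p X1 * svar p X2)
    (hvstar : svar p (fun i => X2 i - regSlope p X1 X2 * X1 i) ≠ 0) :
    regSlope p (fun i => X2 i - regSlope p X1 X2 * X1 i) Y = b2 :=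
  multiple_eq_simple_on_adjusted_second_general p Y X1 X2 b0 b1 b2 hBmin hvstar
end

section
/- Omitted-variable / aggregation theorem: let y = b₀ + Σᵢ₌₁ᵏ bᵢxᵢ be the least-squares regression of Y on X₁,…,X_k. Fix a subset {X_{i₁},…,X_{i_m}} and for each i let xᵢ = cᵢ₀ + Σⱼ₌₁ᵐ c_{i,iⱼ} x_{iⱼ} be the least-squares regression of Xᵢ on the subset (with c_{i,iⱼ} = δ_{i,iⱼ} and cᵢ₀ = 0 when i is itself in the subset). If y = a₀ + Σⱼ₌₁ᵐ a_{iⱼ} x_{iⱼ} is the least-squares regression of Y on the subset, then a_{iⱼ} = Σᵢ₌₁ᵏ bᵢ c_{i,iⱼ} for each j. -/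
/-!
Least squares with an intercept is characterised by the normal equations: the residual is
orthogonal to the constant vector and to every regressor. Substituting the auxiliary fits
`xᵢ = cᵢ₀ + Σⱼ cᵢⱼ x_{ιⱼ} + uᵢ` into the long fit writes the residual of the candidate coefficients
`(b₀ + Σᵢ bᵢ cᵢ₀, Σᵢ bᵢ cᵢⱼ)` on the short regression as `e + Σᵢ bᵢ uᵢ`, where `e` is the residual
of the long regression. Each summand is orthogonal to `1` and to the retained regressors, so the
candidate satisfies the normal equations of the short regression, and uniqueness identifies it
with `(a₀, a)`.
-/

open Finset Filter

section LeastSquares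

variable {σ κ : Type*} [Fintype κ]

def lsResidual (Z : σ → ℝ) (W : κ → σ → ℝ) (t0 : ℝ) (t : κ → ℝ) (s : σ) : ℝ :=
  Z s - t0 - ∑ j, t j * W j s

variable [Fintype σ]

def IsLeastSquares (Z : σ → ℝ) (W : κ → σ → ℝ) (t0 : ℝ) (t : κ → ℝ) : Prop :=
  ∀ u0 u, ∑ s, lsResidual Z W t0 t s ^ 2 ≤ ∑ s, lsResidual Z W u0 u s ^ 2

theorem sum_mul_eq_zero_of_forall_sum_sq_le_s13 (r v : σ → ℝ)
    (h : ∀ ε : ℝ, ∑ s, r s ^ 2 ≤ ∑ s, (r s - ε * v s) ^ 2) :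
    ∑ s, r s * v s = 0 := by
  -- `ε ↦ (∑ v²) ε² - 2 (∑ r v) ε` is nonnegative, so its discriminant `4 (∑ r v)²` is not positive.
  have hquad : ∀ ε : ℝ,
      0 ≤ (∑ s, v s ^ 2) * (ε * ε) + (-2 * ∑ s, r s * v s) * ε + 0 := by
    intro ε
    have hexpand : ∑ s, (r s - ε * v s) ^ 2 =
        ∑ s, r s ^ 2 + ((∑ s, v s ^ 2) * (ε * ε) + (-2 * ∑ s, r s * v s) * ε) := by
      simp only [sum_mul, mul_sum, ← sum_add_distrib]
      exact sum_congr rfl fun s _ => by ring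
    linarith [h ε]
  have hdisc := discrim_le_zero hquad
  rw [discrim, mul_zero, sub_zero] at hdisc
  nlinarith [sq_nonneg (∑ s, r s * v s)]

variable {Z : σ → ℝ} {W : κ → σ → ℝ} {t0 : ℝ} {t : κ → ℝ}

theorem IsLeastSquares.sum_lsResidual_eq_zero (h : IsLeastSquares Z W t0 t) :
    ∑ s, lsResidual Z W t0 t s = 0 := by
  have hshift : ∀ ε s, lsResidual Z W (t0 + ε) t s = lsResidual Z W t0 t s - ε * (1 : σ → ℝ) s :=
    fun ε s => by simp only [lsResidual, Pi.one_apply]; ring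
  simpa using sum_mul_eq_zero_of_forall_sum_sq_le_s13 (lsResidual Z W t0 t) 1 fun ε =>
    (h (t0 + ε) t).trans_eq (sum_congr rfl fun s _ => by rw [hshift])

theorem IsLeastSquares.sum_lsResidual_mul_eq_zero (h : IsLeastSquares Z W t0 t) (i : κ) :
    ∑ s, lsResidual Z W t0 t s * W i s = 0 := by
  classical
  refine sum_mul_eq_zero_of_forall_sum_sq_le_s13 _ _ fun ε => ?_
  have hshift : ∀ s, lsResidual Z W t0 (t + Pi.single i ε) s =
      lsResidual Z W t0 t s - ε * W i s := by
    intro s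
    simp only [lsResidual, Pi.add_apply, add_mul, sum_add_distrib, Pi.single_apply, ite_mul,
      zero_mul, sum_ite_eq', mem_univ, if_true]
    ring
  exact (h t0 (t + Pi.single i ε)).trans_eq (sum_congr rfl fun s _ => by rw [hshift])

theorem isLeastSquares_of_orthogonal (h0 : ∑ s, lsResidual Z W t0 t s = 0)
    (hW : ∀ i, ∑ s, lsResidual Z W t0 t s * W i s = 0) :
    IsLeastSquares Z W t0 t := by
  intro u0 u
  set r := lsResidual Z W t0 t
  set d : σ → ℝ := fun s => (t0 - u0) + ∑ j, (t j - u j) * W j s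
  have hsplit : ∀ s, lsResidual Z W u0 u s = r s + d s := by
    intro s
    simp only [r, d, lsResidual, sub_mul, sum_sub_distrib]
    ring
  have hcross : ∑ s, r s * d s = 0 := by
    simp only [d, mul_add, mul_sum, sum_add_distrib, ← sum_mul, h0, zero_mul, zero_add]
    rw [sum_comm]
    exact sum_eq_zero fun j _ => by
      rw [← mul_zero (t j - u j), ← hW j, mul_sum]
      exact sum_congr rfl fun s _ => by ring
  have hexpand : ∑ s, (r s + d s) ^ 2 = ∑ s, r s ^ 2 + 2 * ∑ s, r s * d s + ∑ s, d s ^ 2 := by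
    simp only [mul_sum, ← sum_add_distrib]
    exact sum_congr rfl fun s _ => by ring
  simp only [hsplit, hexpand, hcross]
  linarith [sum_nonneg fun s (_ : s ∈ univ) => sq_nonneg (d s)]

end LeastSquares

section Aggregation

variable {σ κ μ : Type*} [Fintype κ] [Fintype μ]

theorem lsResidual_aggregate (Y : σ → ℝ) (X : κ → σ → ℝ) (ι : μ → κ) (b0 : ℝ) (b : κ → ℝ)
    (c0 : κ → ℝ) (c : κ → μ → ℝ) (s : σ) :
    lsResidual Y (fun j => X (ι j)) (b0 + ∑ i, b i * c0 i) (fun j => ∑ i, b i * c i j) s =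
      lsResidual Y X b0 b s + ∑ i, b i * lsResidual (X i) (fun j => X (ι j)) (c0 i) (c i) s := by
  simp only [lsResidual, mul_sub, sum_sub_distrib, sum_mul, mul_sum, mul_assoc]
  rw [sum_comm (γ := μ)]
  ring

variable [Fintype σ]

theorem IsLeastSquares.aggregate {Y : σ → ℝ} {X : κ → σ → ℝ}
    {ι : μ → κ} {b0 : ℝ} {b : κ → ℝ} {c0 : κ → ℝ} {c : κ → μ → ℝ}
    (hb : IsLeastSquares Y X b0 b)
    (hc : ∀ i, IsLeastSquares (X i) (fun j => X (ι j)) (c0 i) (c i)) :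
    IsLeastSquares Y (fun j => X (ι j)) (b0 + ∑ i, b i * c0 i) (fun j => ∑ i, b i * c i j) := by
  apply isLeastSquares_of_orthogonal
  · simp only [lsResidual_aggregate, sum_add_distrib, hb.sum_lsResidual_eq_zero]
    rw [sum_comm]
    simp [← mul_sum, fun i => (hc i).sum_lsResidual_eq_zero]
  · intro j
    simp only [lsResidual_aggregate, add_mul, sum_add_distrib,
      hb.sum_lsResidual_mul_eq_zero (ι j), sum_mul, mul_assoc]
    rw [sum_comm]
    simp [← mul_sum, fun i => (hc i).sum_lsResidual_mul_eq_zero j]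

end Aggregation

theorem aggregation_theorem_general
    (p k m : ℕ) (Y : Fin p → ℝ) (X : Fin k → Fin p → ℝ)
    (ι : Fin m → Fin k)
    (b0 : ℝ) (b : Fin k → ℝ)
    (hBmin : ∀ (t0 : ℝ) (t : Fin k → ℝ),
      ∑ i, (Y i - b0 - ∑ j, b j * X j i)^2 ≤ ∑ i, (Y i - t0 - ∑ j, t j * X j i)^2)
    (c0 : Fin k → ℝ) (c : Fin k → Fin m → ℝ)
    (hCmin : ∀ (i : Fin k) (t0 : ℝ) (t : Fin m → ℝ),
      ∑ s, (X i s - c0 i - ∑ j, c i j * X (ι j) s)^2 ≤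
        ∑ s, (X i s - t0 - ∑ j, t j * X (ι j) s)^2)
    (a0 : ℝ) (a : Fin m → ℝ)
    (hAuniq : ∀ (t0 : ℝ) (t : Fin m → ℝ),
      ∑ i, (Y i - t0 - ∑ j, t j * X (ι j) i)^2 ≤
        ∑ i, (Y i - a0 - ∑ j, a j * X (ι j) i)^2 →
      t0 = a0 ∧ t = a) :
    ∀ j : Fin m, a j = ∑ i, b i * c i j := by
  have hfit : IsLeastSquares Y (fun j => X (ι j)) (b0 + ∑ i, b i * c0 i)
      (fun j => ∑ i, b i * c i j) :=
    IsLeastSquares.aggregate hBmin hCmin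
  intro j
  exact (congrFun (hAuniq _ _ (hfit a0 a)).2 j).symm

theorem aggregation_theorem
    (p k m : ℕ) (Y : Fin p → ℝ) (X : Fin k → Fin p → ℝ)
    (ι : Fin m → Fin k) (hι : Function.Injective ι)
    (b0 : ℝ) (b : Fin k → ℝ)
    (hBmin : ∀ (t0 : ℝ) (t : Fin k → ℝ),
      ∑ i, (Y i - b0 - ∑ j, b j * X j i)^2 ≤ ∑ i, (Y i - t0 - ∑ j, t j * X j i)^2)
    (hBuniq : ∀ (t0 : ℝ) (t : Fin k → ℝ),
      ∑ i, (Y i - t0 - ∑ j, t j * X j i)^2 ≤ ∑ i, (Y i - b0 - ∑ j, b j * X j i)^2 →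
      t0 = b0 ∧ t = b)
    (c0 : Fin k → ℝ) (c : Fin k → Fin m → ℝ)
    (hCmin : ∀ (i : Fin k) (t0 : ℝ) (t : Fin m → ℝ),
      ∑ s, (X i s - c0 i - ∑ j, c i j * X (ι j) s)^2 ≤
        ∑ s, (X i s - t0 - ∑ j, t j * X (ι j) s)^2)
    (hCuniq : ∀ (i : Fin k) (t0 : ℝ) (t : Fin m → ℝ),
      ∑ s, (X i s - t0 - ∑ j, t j * X (ι j) s)^2 ≤
        ∑ s, (X i s - c0 i - ∑ j, c i j * X (ι j) s)^2 →
      t0 = c0 i ∧ t = c i)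
    (hdelta : ∀ (j0 : Fin m), c0 (ι j0) = 0 ∧ ∀ j, c (ι j0) j = if j = j0 then 1 else 0)
    (a0 : ℝ) (a : Fin m → ℝ)
    (hAmin : ∀ (t0 : ℝ) (t : Fin m → ℝ),
      ∑ i, (Y i - a0 - ∑ j, a j * X (ι j) i)^2 ≤
        ∑ i, (Y i - t0 - ∑ j, t j * X (ι j) i)^2)
    (hAuniq : ∀ (t0 : ℝ) (t : Fin m → ℝ),
      ∑ i, (Y i - t0 - ∑ j, t j * X (ι j) i)^2 ≤
        ∑ i, (Y i - a0 - ∑ j, a j * X (ι j) i)^2 →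
      t0 = a0 ∧ t = a) :
    ∀ j : Fin m, a j = ∑ i, b i * c i j :=
  aggregation_theorem_general p k m Y X ι b0 b hBmin c0 c hCmin a0 a hAuniq
end
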